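/- arXiv:1910.14173 — 2 statements merged into one kernel-verified Lean document; each statement's English description precedes it below -/
import Mathlib

section
/- Let T be a ℂ-linear functional on D^{{M_p}}. Suppose there exist (r_p) ∈ ℜ and C > 0 such that |T(φ)| ≤ C ‖φ‖_{(r_p)} for all φ ∈ D^{{M_p}}. Then, for this same sequence (r_p), for every ε > 0 there exists a compact set K ⊂ ℝ^d such that |T(φ)| ≤ ε ‖φ‖_{(r_p)} for all φ ∈ D^{{M_p}} with supp φ ∩ K = ∅. -/
open scoped ENNReal BigOperators

noncomputable section

/-- `ℝ^d` modeled as Euclidean space. -/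
abbrev Euc (d : ℕ) := EuclideanSpace ℝ (Fin d)

/-- The partial derivative `∂_i φ` of a function `φ : ℝ^d → ℂ`. -/
noncomputable def pderivI {d : ℕ} (i : Fin d) (φ : Euc d → ℂ) : Euc d → ℂ :=
  fun x => fderiv ℝ φ x (EuclideanSpace.single i 1)

/-- The multi-index partial derivative `∂^k φ = ∂_1^{k_1} ⋯ ∂_d^{k_d} φ`. -/
noncomputable def mderiv {d : ℕ} (k : Fin d → ℕ) (φ : Euc d → ℂ) : Euc d → ℂ :=
  (List.finRange d).foldr (fun i ψ => (pderivI i)^[k i] ψ) φ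

/-- The class ℜ of sequences with `r 0 = 1` monotonically increasing to infinity. -/
def RClass (r : ℕ → ℝ) : Prop :=
  r 0 = 1 ∧ Monotone r ∧ Filter.Tendsto r Filter.atTop Filter.atTop

/-- The product sequence `R_p = ∏_{i=0}^p r_i`. -/
noncomputable def prodSeq (r : ℕ → ℝ) (p : ℕ) : ℝ :=
  ∏ i ∈ Finset.range (p + 1), r i

/-- The seminorm `q_{K,h}(φ)`, with values in `[0,∞]`. -/
noncomputable def qnormK {d : ℕ} (M : ℕ → ℝ) (K : Set (Euc d)) (h : ℝ)
    (φ : Euc d → ℂ) : ℝ≥0∞ :=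
  ⨆ (k : Fin d → ℕ) (x : K), ENNReal.ofReal (‖mderiv k φ x‖ / (h ^ (∑ i, k i) * M (∑ i, k i)))

/-- The seminorm `sup_{k,x∈K} |∂^k φ(x)|/(R_{|k|} M_k)`, with values in `[0,∞]`. -/
noncomputable def qrnormK {d : ℕ} (M : ℕ → ℝ) (r : ℕ → ℝ) (K : Set (Euc d))
    (φ : Euc d → ℂ) : ℝ≥0∞ :=
  ⨆ (k : Fin d → ℕ) (x : K),
    ENNReal.ofReal (‖mderiv k φ x‖ / (prodSeq r (∑ i, k i) * M (∑ i, k i)))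

/-- The norm `‖φ‖_{∞,h}`, with values in `[0,∞]`. -/
noncomputable def hnorm {d : ℕ} (M : ℕ → ℝ) (h : ℝ) (φ : Euc d → ℂ) : ℝ≥0∞ :=
  ⨆ (k : Fin d → ℕ) (x : Euc d),
    ENNReal.ofReal (‖mderiv k φ x‖ / (h ^ (∑ i, k i) * M (∑ i, k i)))

/-- The norm `‖φ‖_{(r_p)}`, with values in `[0,∞]`. -/
noncomputable def rnorm {d : ℕ} (M : ℕ → ℝ) (r : ℕ → ℝ) (φ : Euc d → ℂ) : ℝ≥0∞ :=
  ⨆ (k : Fin d → ℕ) (x : Euc d),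
    ENNReal.ofReal (‖mderiv k φ x‖ / (prodSeq r (∑ i, k i) * M (∑ i, k i)))

/-- Membership in the space `D^{{M_p}}` of Roumieu test functions. -/
def IsDMp {d : ℕ} (M : ℕ → ℝ) (φ : Euc d → ℂ) : Prop :=
  ContDiff ℝ (⊤ : ℕ∞) φ ∧ HasCompactSupport φ ∧ ∃ h > 0, hnorm M h φ < ⊤

/-- `T` is a ℂ-linear functional on `D^{{M_p}}`. -/
def LinearOnD {d : ℕ} (M : ℕ → ℝ) (T : (Euc d → ℂ) → ℂ) : Prop :=
  (∀ φ ψ, IsDMp M φ → IsDMp M ψ → T (φ + ψ) = T φ + T ψ) ∧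
  (∀ (c : ℂ) (φ), IsDMp M φ → T (c • φ) = c * T φ)

/-- `T` is a Roumieu ultradistribution. -/
def IsRoumieuUD {d : ℕ} (M : ℕ → ℝ) (T : (Euc d → ℂ) → ℂ) : Prop :=
  ∀ K : Set (Euc d), IsCompact K →
    ∃ s, RClass s ∧ ∃ C > 0, ∀ φ, IsDMp M φ → tsupport φ ⊆ K →
      ENNReal.ofReal ‖T φ‖ ≤ ENNReal.ofReal C * rnorm M s φ

/-- `u` is an ℜ-approximate unit. -/
def IsRApproxUnit {d : ℕ} (M : ℕ → ℝ) (u : ℕ → Euc d → ℂ) : Prop :=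
  (∀ n, IsDMp M (u n)) ∧
  (∀ r, RClass r → (⨆ n, rnorm M r (u n)) < ⊤) ∧
  (∀ K : Set (Euc d), IsCompact K → ∃ h > 0,
    Filter.Tendsto (fun n => qnormK M K h (fun x => u n x - 1)) Filter.atTop (nhds 0))

/-- `u` is a special ℜ-approximate unit. -/
def IsSpecialRApproxUnit {d : ℕ} (M : ℕ → ℝ) (u : ℕ → Euc d → ℂ) : Prop :=
  IsRApproxUnit M u ∧
  ∀ K : Set (Euc d), IsCompact K → ∃ n₀, ∀ n ≥ n₀, ∀ x ∈ K, u n x = 1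

/-- Condition (M.1): `M_p^2 ≤ M_{p-1} M_{p+1}` for `p ≥ 1`. -/
def CondM1 (M : ℕ → ℝ) : Prop := ∀ p : ℕ, M (p + 1) ^ 2 ≤ M p * M (p + 2)

/-- Condition (M.2). -/
def CondM2 (M : ℕ → ℝ) : Prop :=
  ∃ A > 0, ∃ H ≥ (1 : ℝ), ∀ p q : ℕ, q ≤ p → M p ≤ A * H ^ p * M q * M (p - q)

/-- Condition (M.3). -/
def CondM3 (M : ℕ → ℝ) : Prop :=
  ∃ A > 0, ∀ q : ℕ, 1 ≤ q →
    ∑' p : ℕ, M (q + p) / M (q + p + 1) ≤ A * q * M q / M (q + 1)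


lemma pderivI_contDiff {d : ℕ} (i : Fin d) {φ : Euc d → ℂ} (h : ContDiff ℝ (⊤:ℕ∞) φ) :
    ContDiff ℝ (⊤:ℕ∞) (pderivI i φ) := by
  have h2 := (contDiff_infty_iff_fderiv.mp h).2
  exact (ContinuousLinearMap.apply ℝ ℂ (EuclideanSpace.single i (1:ℝ))).contDiff.comp h2

lemma pderivI_add {d : ℕ} (i : Fin d) {φ ψ : Euc d → ℂ}
    (h1 : Differentiable ℝ φ) (h2 : Differentiable ℝ ψ) :
    pderivI i (φ + ψ) = pderivI i φ + pderivI i ψ := by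
  funext x
  simp [pderivI, fderiv_add (h1 x) (h2 x)]

lemma pderivI_smul {d : ℕ} (i : Fin d) (c : ℂ) {φ : Euc d → ℂ}
    (h1 : Differentiable ℝ φ) :
    pderivI i (c • φ) = c • pderivI i φ := by
  funext x
  simp [pderivI, fderiv_const_smul (h1 x) c]

lemma pderivI_zero {d : ℕ} (i : Fin d) : pderivI i (0 : Euc d → ℂ) = 0 := by
  funext x
  have : (0 : Euc d → ℂ) = fun _ => (0:ℂ) := rfl
  simp [pderivI, this, fderiv_const]

lemma pderivI_tsupport {d : ℕ} (i : Fin d) (φ : Euc d → ℂ) :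
    tsupport (pderivI i φ) ⊆ tsupport φ := by
  apply closure_minimal _ (isClosed_closure)
  intro x hx
  by_contra hxt
  have hev : φ =ᶠ[nhds x] 0 := by
    have : IsOpen (tsupport φ)ᶜ := (isClosed_tsupport φ).isOpen_compl
    filter_upwards [this.mem_nhds hxt] with y hy
    exact image_eq_zero_of_notMem_tsupport hy
  have h0 : fderiv ℝ φ x = fderiv ℝ (fun _ => (0:ℂ)) x := hev.fderiv_eq
  simp only [Function.mem_support, pderivI] at hx
  rw [h0, fderiv_fun_const] at hx
  simp at hx

lemma cd_diff {d : ℕ} {φ : Euc d → ℂ} (h : ContDiff ℝ (⊤:ℕ∞) φ) : Differentiable ℝ φ :=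
  h.differentiable (by simp)

lemma iter_contDiff {d : ℕ} (i : Fin d) (n : ℕ) {φ : Euc d → ℂ} (h : ContDiff ℝ (⊤:ℕ∞) φ) :
    ContDiff ℝ (⊤:ℕ∞) ((pderivI i)^[n] φ) := by
  induction n with
  | zero => simpa using h
  | succ n ih => rw [Function.iterate_succ_apply']; exact pderivI_contDiff i ih

lemma iter_add {d : ℕ} (i : Fin d) (n : ℕ) {φ ψ : Euc d → ℂ}
    (h1 : ContDiff ℝ (⊤:ℕ∞) φ) (h2 : ContDiff ℝ (⊤:ℕ∞) ψ) :
    (pderivI i)^[n] (φ + ψ) = (pderivI i)^[n] φ + (pderivI i)^[n] ψ := by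
  induction n with
  | zero => simp
  | succ n ih =>
    rw [Function.iterate_succ_apply', Function.iterate_succ_apply',
      Function.iterate_succ_apply', ih,
      pderivI_add i (cd_diff (iter_contDiff i n h1)) (cd_diff (iter_contDiff i n h2))]

lemma iter_smul {d : ℕ} (i : Fin d) (n : ℕ) (c : ℂ) {φ : Euc d → ℂ}
    (h1 : ContDiff ℝ (⊤:ℕ∞) φ) :
    (pderivI i)^[n] (c • φ) = c • (pderivI i)^[n] φ := by
  induction n with
  | zero => simp
  | succ n ih =>
    rw [Function.iterate_succ_apply', Function.iterate_succ_apply', ih,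
      pderivI_smul i c (cd_diff (iter_contDiff i n h1))]

lemma iter_tsupport {d : ℕ} (i : Fin d) (n : ℕ) (φ : Euc d → ℂ) :
    tsupport ((pderivI i)^[n] φ) ⊆ tsupport φ := by
  induction n with
  | zero => simp
  | succ n ih =>
    rw [Function.iterate_succ_apply']
    exact (pderivI_tsupport i _).trans ih

section listlemmas

variable {d : ℕ} (k : Fin d → ℕ)

lemma foldr_contDiff (l : List (Fin d)) {φ : Euc d → ℂ} (h : ContDiff ℝ (⊤:ℕ∞) φ) :
    ContDiff ℝ (⊤:ℕ∞) (l.foldr (fun i ψ => (pderivI i)^[k i] ψ) φ) := by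
  induction l with
  | nil => simpa using h
  | cons a l ih => rw [List.foldr_cons]; exact iter_contDiff a (k a) ih

lemma foldr_add (l : List (Fin d)) {φ ψ : Euc d → ℂ}
    (h1 : ContDiff ℝ (⊤:ℕ∞) φ) (h2 : ContDiff ℝ (⊤:ℕ∞) ψ) :
    l.foldr (fun i ψ => (pderivI i)^[k i] ψ) (φ + ψ) =
      l.foldr (fun i ψ => (pderivI i)^[k i] ψ) φ +
      l.foldr (fun i ψ => (pderivI i)^[k i] ψ) ψ := by
  induction l with
  | nil => simp
  | cons a l ih =>
    simp only [List.foldr_cons, ih]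
    exact iter_add a (k a) (foldr_contDiff k l h1) (foldr_contDiff k l h2)

lemma foldr_smul (l : List (Fin d)) (c : ℂ) {φ : Euc d → ℂ}
    (h1 : ContDiff ℝ (⊤:ℕ∞) φ) :
    l.foldr (fun i ψ => (pderivI i)^[k i] ψ) (c • φ) =
      c • l.foldr (fun i ψ => (pderivI i)^[k i] ψ) φ := by
  induction l with
  | nil => simp
  | cons a l ih =>
    simp only [List.foldr_cons, ih]
    exact iter_smul a (k a) c (foldr_contDiff k l h1)

lemma foldr_tsupport (l : List (Fin d)) (φ : Euc d → ℂ) :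
    tsupport (l.foldr (fun i ψ => (pderivI i)^[k i] ψ) φ) ⊆ tsupport φ := by
  induction l with
  | nil => simp
  | cons a l ih =>
    rw [List.foldr_cons]
    exact (iter_tsupport a (k a) _).trans ih

end listlemmas

lemma mderiv_contDiff {d : ℕ} (k : Fin d → ℕ) {φ : Euc d → ℂ} (h : ContDiff ℝ (⊤:ℕ∞) φ) :
    ContDiff ℝ (⊤:ℕ∞) (mderiv k φ) := foldr_contDiff k _ h

lemma mderiv_add {d : ℕ} (k : Fin d → ℕ) {φ ψ : Euc d → ℂ}
    (h1 : ContDiff ℝ (⊤:ℕ∞) φ) (h2 : ContDiff ℝ (⊤:ℕ∞) ψ) :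
    mderiv k (φ + ψ) = mderiv k φ + mderiv k ψ := foldr_add k _ h1 h2

lemma mderiv_smul {d : ℕ} (k : Fin d → ℕ) (c : ℂ) {φ : Euc d → ℂ}
    (h1 : ContDiff ℝ (⊤:ℕ∞) φ) :
    mderiv k (c • φ) = c • mderiv k φ := foldr_smul k _ c h1

lemma mderiv_tsupport {d : ℕ} (k : Fin d → ℕ) (φ : Euc d → ℂ) :
    tsupport (mderiv k φ) ⊆ tsupport φ := foldr_tsupport k _ φ

lemma mderiv_zero_eq {d : ℕ} (φ : Euc d → ℂ) : mderiv (fun _ => 0) φ = φ := by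
  unfold mderiv
  generalize (List.finRange d) = l
  induction l with
  | nil => simp
  | cons a l ih => simpa using ih

lemma mderiv_zero_fun {d : ℕ} (k : Fin d → ℕ) : mderiv k (0 : Euc d → ℂ) = 0 := by
  have hc : ContDiff ℝ (⊤:ℕ∞) (0 : Euc d → ℂ) := contDiff_const
  have h := mderiv_smul k (0:ℂ) hc
  have h2 : (0:ℂ) • (0 : Euc d → ℂ) = 0 := by simp
  rw [h2] at h
  rw [h]
  simp

lemma IsDMp.cd' {d : ℕ} {M : ℕ → ℝ} {φ : Euc d → ℂ} (h : IsDMp M φ) :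
    ContDiff ℝ (⊤:ℕ∞) φ := h.1.of_le (by simp)

lemma rclass_one_le {r : ℕ → ℝ} (hr : RClass r) (i : ℕ) : 1 ≤ r i := by
  rw [← hr.1]; exact hr.2.1 (Nat.zero_le i)

lemma prodSeq_one_le {r : ℕ → ℝ} (hr : RClass r) (p : ℕ) : 1 ≤ prodSeq r p := by
  have := Finset.prod_le_prod (s := Finset.range (p+1)) (f := fun _ => (1:ℝ)) (g := r)
    (fun i _ => zero_le_one) (fun i _ => rclass_one_le hr i)
  simpa [prodSeq] using this

lemma prodSeq_pos {r : ℕ → ℝ} (hr : RClass r) (p : ℕ) : 0 < prodSeq r p :=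
  lt_of_lt_of_le one_pos (prodSeq_one_le hr p)

lemma le_rnorm {d : ℕ} (M : ℕ → ℝ) (r : ℕ → ℝ) (φ : Euc d → ℂ) (k : Fin d → ℕ) (x : Euc d) :
    ENNReal.ofReal (‖mderiv k φ x‖ / (prodSeq r (∑ i, k i) * M (∑ i, k i))) ≤ rnorm M r φ :=
  le_iSup_of_le k (le_iSup_of_le x le_rfl)

lemma apply_le_rnorm {d : ℕ} {M : ℕ → ℝ} {r : ℕ → ℝ} (hM0 : M 0 = 1) (hr : RClass r)
    (φ : Euc d → ℂ) (x : Euc d) : ENNReal.ofReal ‖φ x‖ ≤ rnorm M r φ := by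
  have h := le_rnorm M r φ (fun _ => 0) x
  have hz : (∑ i : Fin d, (0:ℕ)) = 0 := by simp
  rw [mderiv_zero_eq, hz, hM0] at h
  have hp1 : prodSeq r 0 = 1 := by simp [prodSeq, hr.1]
  rw [hp1] at h
  simpa using h

lemma rnorm_eq_zero_imp {d : ℕ} {M : ℕ → ℝ} {r : ℕ → ℝ} (hM0 : M 0 = 1) (hr : RClass r)
    {φ : Euc d → ℂ} (h : rnorm M r φ = 0) : φ = 0 := by
  funext x
  have := apply_le_rnorm hM0 hr φ x
  rw [h, le_zero_iff, ENNReal.ofReal_eq_zero] at this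
  simpa using norm_le_zero_iff.mp this

lemma hnorm_anti {d : ℕ} {M : ℕ → ℝ} (hMpos : ∀ p, 0 < M p) {h h' : ℝ} (hh : 0 < h)
    (hle : h ≤ h') (φ : Euc d → ℂ) : hnorm M h' φ ≤ hnorm M h φ := by
  refine iSup_le fun k => iSup_le fun x => ?_
  refine le_trans ?_ (le_iSup_of_le k (le_iSup_of_le x le_rfl))
  apply ENNReal.ofReal_le_ofReal
  exact div_le_div_of_nonneg_left (norm_nonneg _)
    (mul_pos (pow_pos hh _) (hMpos _))
    (mul_le_mul_of_nonneg_right (pow_le_pow_left₀ hh.le hle _) (hMpos _).le)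

lemma hnorm_add_le {d : ℕ} {M : ℕ → ℝ} (hMpos : ∀ p, 0 < M p) {h : ℝ} (hh : 0 < h)
    {φ ψ : Euc d → ℂ} (h1 : ContDiff ℝ (⊤:ℕ∞) φ) (h2 : ContDiff ℝ (⊤:ℕ∞) ψ) :
    hnorm M h (φ + ψ) ≤ hnorm M h φ + hnorm M h ψ := by
  refine iSup_le fun k => iSup_le fun x => ?_
  rw [mderiv_add k h1 h2]
  have hD : 0 < h ^ (∑ i, k i) * M (∑ i, k i) := mul_pos (pow_pos hh _) (hMpos _)
  calc ENNReal.ofReal (‖(mderiv k φ + mderiv k ψ) x‖ / (h ^ (∑ i, k i) * M (∑ i, k i)))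
      ≤ ENNReal.ofReal (‖mderiv k φ x‖ / (h ^ (∑ i, k i) * M (∑ i, k i))
        + ‖mderiv k ψ x‖ / (h ^ (∑ i, k i) * M (∑ i, k i))) := by
        apply ENNReal.ofReal_le_ofReal
        rw [← add_div]
        exact div_le_div_of_nonneg_right (norm_add_le _ _) hD.le
    _ = ENNReal.ofReal (‖mderiv k φ x‖ / (h ^ (∑ i, k i) * M (∑ i, k i)))
        + ENNReal.ofReal (‖mderiv k ψ x‖ / (h ^ (∑ i, k i) * M (∑ i, k i))) := by
        rw [ENNReal.ofReal_add (div_nonneg (norm_nonneg _) hD.le) (div_nonneg (norm_nonneg _) hD.le)]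
    _ ≤ _ := by
        gcongr
        · exact le_iSup_of_le k (le_iSup_of_le x le_rfl)
        · exact le_iSup_of_le k (le_iSup_of_le x le_rfl)

lemma hnorm_smul_le {d : ℕ} {M : ℕ → ℝ} {h : ℝ} (c : ℂ)
    {φ : Euc d → ℂ} (h1 : ContDiff ℝ (⊤:ℕ∞) φ) :
    hnorm M h (c • φ) ≤ ENNReal.ofReal ‖c‖ * hnorm M h φ := by
  refine iSup_le fun k => iSup_le fun x => ?_
  rw [mderiv_smul k c h1]
  have : ‖(c • mderiv k φ) x‖ = ‖c‖ * ‖mderiv k φ x‖ := by simp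
  rw [this, mul_div_assoc, ENNReal.ofReal_mul (norm_nonneg c)]
  gcongr
  exact le_iSup_of_le k (le_iSup_of_le x le_rfl)

lemma rnorm_smul_le {d : ℕ} {M : ℕ → ℝ} {r : ℕ → ℝ} (c : ℂ)
    {φ : Euc d → ℂ} (h1 : ContDiff ℝ (⊤:ℕ∞) φ) :
    rnorm M r (c • φ) ≤ ENNReal.ofReal ‖c‖ * rnorm M r φ := by
  refine iSup_le fun k => iSup_le fun x => ?_
  rw [mderiv_smul k c h1]
  have : ‖(c • mderiv k φ) x‖ = ‖c‖ * ‖mderiv k φ x‖ := by simp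
  rw [this, mul_div_assoc, ENNReal.ofReal_mul (norm_nonneg c)]
  gcongr
  exact le_iSup_of_le k (le_iSup_of_le x le_rfl)

lemma hnorm_zero_fun {d : ℕ} (M : ℕ → ℝ) (h : ℝ) : hnorm (d := d) M h 0 = 0 := by
  refine le_antisymm (iSup_le fun k => iSup_le fun x => ?_) zero_le
  simp [mderiv_zero_fun]

lemma IsDMp.zero {d : ℕ} (M : ℕ → ℝ) : IsDMp (d := d) M 0 := by
  refine ⟨contDiff_const, ?_, ⟨1, one_pos, ?_⟩⟩
  · have : tsupport (0 : Euc d → ℂ) = ∅ := by simp [tsupport]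
    rw [HasCompactSupport, this]
    exact isCompact_empty
  · rw [hnorm_zero_fun]
    exact ENNReal.zero_lt_top

lemma IsDMp.add {d : ℕ} {M : ℕ → ℝ} (hMpos : ∀ p, 0 < M p) {φ ψ : Euc d → ℂ}
    (h1 : IsDMp M φ) (h2 : IsDMp M ψ) : IsDMp M (φ + ψ) := by
  obtain ⟨c1, s1, h, hh, hf⟩ := h1
  obtain ⟨c2, s2, h', hh', hf'⟩ := h2
  refine ⟨c1.add c2, s1.add s2, max h h', lt_max_of_lt_left hh, ?_⟩
  calc hnorm M (max h h') (φ + ψ)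
      ≤ hnorm M (max h h') φ + hnorm M (max h h') ψ :=
        hnorm_add_le hMpos (lt_max_of_lt_left hh) (c1.of_le (by simp)) (c2.of_le (by simp))
    _ ≤ hnorm M h φ + hnorm M h' ψ :=
        add_le_add (hnorm_anti hMpos hh (le_max_left _ _) φ)
          (hnorm_anti hMpos hh' (le_max_right _ _) ψ)
    _ < ⊤ := ENNReal.add_lt_top.mpr ⟨hf, hf'⟩

lemma IsDMp.smul {d : ℕ} {M : ℕ → ℝ} (c : ℂ) {φ : Euc d → ℂ}
    (h1 : IsDMp M φ) : IsDMp M (c • φ) := by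
  obtain ⟨c1, s1, h, hh, hf⟩ := h1
  refine ⟨c1.const_smul c, s1.smul_left, h, hh, ?_⟩
  calc hnorm M h (c • φ) ≤ ENNReal.ofReal ‖c‖ * hnorm M h φ :=
        hnorm_smul_le c (c1.of_le (by simp))
    _ < ⊤ := ENNReal.mul_lt_top ENNReal.ofReal_lt_top hf

lemma T_zero {d : ℕ} {M : ℕ → ℝ} {T : (Euc d → ℂ) → ℂ} (hT : LinearOnD M T) :
    T 0 = 0 := by
  have h := hT.2 0 0 (IsDMp.zero M)
  simpa using h

lemma mderiv_finsum {d : ℕ} (k : Fin d → ℕ) {ι : Type*} (s : Finset ι)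
    (g : ι → Euc d → ℂ) (hg : ∀ j ∈ s, ContDiff ℝ (⊤:ℕ∞) (g j)) :
    mderiv k (∑ j ∈ s, g j) = ∑ j ∈ s, mderiv k (g j) := by
  classical
  induction s using Finset.cons_induction with
  | empty => simpa using mderiv_zero_fun k
  | cons a s ha ih =>
    rw [Finset.sum_cons, Finset.sum_cons,
      mderiv_add k (hg a (Finset.mem_cons_self a s)) ?_, ih (fun j hj => hg j (Finset.mem_cons_of_mem hj))]
    have : (∑ j ∈ s, g j) = fun x => ∑ j ∈ s, g j x := by
      funext x; simp
    rw [this]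
    exact ContDiff.sum fun j hj => hg j (Finset.mem_cons_of_mem hj)

lemma IsDMp_T_finsum {d : ℕ} {M : ℕ → ℝ} (hMpos : ∀ p, 0 < M p)
    {T : (Euc d → ℂ) → ℂ} (hT : LinearOnD M T) {ι : Type*} (s : Finset ι)
    (g : ι → Euc d → ℂ) (hg : ∀ j ∈ s, IsDMp M (g j)) :
    IsDMp M (∑ j ∈ s, g j) ∧ T (∑ j ∈ s, g j) = ∑ j ∈ s, T (g j) := by
  classical
  induction s using Finset.cons_induction with
  | empty => simpa using ⟨IsDMp.zero M, T_zero hT⟩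
  | cons a s ha ih =>
    obtain ⟨hd, ht⟩ := ih (fun j hj => hg j (Finset.mem_cons_of_mem hj))
    have hga := hg a (Finset.mem_cons_self a s)
    constructor
    · rw [Finset.sum_cons]
      exact IsDMp.add hMpos hga hd
    · rw [Finset.sum_cons, Finset.sum_cons, hT.1 _ _ hga hd, ht]

theorem stmt1' {d : ℕ} (M : ℕ → ℝ) (hMpos : ∀ p, 0 < M p) (hM0 : M 0 = 1)
    (T : (Euc d → ℂ) → ℂ) (hTlin : LinearOnD M T)
    (r : ℕ → ℝ) (hr : RClass r) (C : ℝ) (hC : 0 < C)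
    (hbound : ∀ φ, IsDMp M φ →
      ENNReal.ofReal ‖T φ‖ ≤ ENNReal.ofReal C * rnorm M r φ) :
    ∀ ε > 0, ∃ K : Set (Euc d), IsCompact K ∧
      ∀ φ, IsDMp M φ → Disjoint (tsupport φ) K →
        ENNReal.ofReal ‖T φ‖ ≤ ENNReal.ofReal ε * rnorm M r φ := by
  intro ε hε
  by_contra hcon
  push_neg at hcon
  have hpick : ∀ K : Set (Euc d), IsCompact K → ∃ φ, IsDMp M φ ∧
      Disjoint (tsupport φ) K ∧
      ENNReal.ofReal ε * rnorm M r φ < ENNReal.ofReal ‖T φ‖ := by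
    intro K hK
    obtain ⟨φ, h1, h2, h3⟩ := hcon K hK
    exact ⟨φ, h1, h2, h3⟩
  choose pick hp1 hp2 hp3 using hpick
  -- build the accumulated compact sets
  let A : ℕ → Σ' S : Set (Euc d), IsCompact S :=
    fun n => Nat.rec (⟨∅, isCompact_empty⟩ : Σ' S : Set (Euc d), IsCompact S)
      (fun _ p => ⟨p.1 ∪ tsupport (pick p.1 p.2), p.2.union (hp1 p.1 p.2).2.1⟩) n
  let φ : ℕ → Euc d → ℂ := fun n => pick (A n).1 (A n).2
  have hAsucc : ∀ n, (A (n+1)).1 = (A n).1 ∪ tsupport (φ n) := fun n => rfl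
  have hAmono : Monotone (fun n => (A n).1) := by
    apply monotone_nat_of_le_succ
    intro n
    rw [hAsucc n]
    exact Set.subset_union_left
  have hφD : ∀ n, IsDMp M (φ n) := fun n => hp1 _ _
  have hφdisj : ∀ n, Disjoint (tsupport (φ n)) ((A n).1) := fun n => hp2 _ _
  have hsupsub : ∀ n, tsupport (φ n) ⊆ (A (n+1)).1 := by
    intro n; rw [hAsucc n]; exact Set.subset_union_right
  have hdisj : ∀ i j, i < j → Disjoint (tsupport (φ i)) (tsupport (φ j)) := by
    intro i j hij
    have h1 : tsupport (φ i) ⊆ (A j).1 :=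
      (hsupsub i).trans (hAmono hij)
    exact (Set.disjoint_of_subset_left h1 (hφdisj j).symm)
  -- basic quantities
  set t : ℕ → ℂ := fun n => T (φ n) with ht
  set a : ℕ → ℝ≥0∞ := fun n => rnorm M r (φ n) with ha
  have hstrict : ∀ n, ENNReal.ofReal ε * a n < ENNReal.ofReal ‖t n‖ := fun n => hp3 _ _
  have hane_top : ∀ n, a n ≠ ⊤ := by
    intro n hTop
    have := hstrict n
    rw [hTop, ENNReal.mul_top (by simp [ENNReal.ofReal_eq_zero]; linarith)] at this
    exact (not_top_lt this)
  have htne : ∀ n, t n ≠ 0 := by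
    intro n h0
    have := hstrict n
    rw [h0] at this
    simp at this
  have hane0 : ∀ n, a n ≠ 0 := by
    intro n h0
    apply htne n
    have hphi0 : φ n = 0 := rnorm_eq_zero_imp hM0 hr h0
    rw [ht]; simp only; rw [hphi0]; exact T_zero hTlin
  set a' : ℕ → ℝ := fun n => (a n).toReal with ha'
  have ha'pos : ∀ n, 0 < a' n := fun n => ENNReal.toReal_pos (hane0 n) (hane_top n)
  have haofReal : ∀ n, a n = ENNReal.ofReal (a' n) := fun n =>
    (ENNReal.ofReal_toReal (hane_top n)).symm
  have hεa : ∀ n, ε * a' n < ‖t n‖ := by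
    intro n
    have := hstrict n
    rw [haofReal n, ← ENNReal.ofReal_mul hε.le] at this
    exact (ENNReal.ofReal_lt_ofReal_iff_of_nonneg (by positivity)).mp this
  -- coefficients
  set c : ℕ → ℂ := fun n => (starRingEnd ℂ) (t n) / ((‖t n‖ : ℂ) * ((a' n : ℝ) : ℂ)) with hc
  have hnormc : ∀ n, ‖c n‖ = (a' n)⁻¹ := by
    intro n
    rw [hc]
    simp only [norm_div, norm_mul, RCLike.norm_conj]
    rw [Complex.norm_real, Complex.norm_real]
    rw [Real.norm_eq_abs, Real.norm_eq_abs, abs_of_nonneg (norm_nonneg _),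
      abs_of_pos (ha'pos n)]
    rw [div_mul_eq_div_div, div_self (norm_ne_zero_iff.mpr (htne n)), one_div]
  have hct : ∀ n, c n * t n = ((‖t n‖ / a' n : ℝ) : ℂ) := by
    intro n
    rw [hc]
    have h1 : (starRingEnd ℂ) (t n) * t n = ((‖t n‖^2 : ℝ) : ℂ) := by
      rw [Complex.conj_mul']
      push_cast
      ring
    rw [div_mul_eq_mul_div, h1]
    have h2 : ((‖t n‖ : ℂ) * ((a' n : ℝ) : ℂ)) = ((‖t n‖ * a' n : ℝ) : ℂ) := by push_cast; ring
    rw [h2]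
    rw [← Complex.ofReal_div]
    congr 1
    rw [pow_two, mul_div_mul_left _ _ (norm_ne_zero_iff.mpr (htne n))]
  -- the test function
  set N : ℕ := ⌈C / ε⌉₊ + 1 with hN
  set ψ : Euc d → ℂ := ∑ j ∈ Finset.range N, c j • φ j with hψ
  have hDMpj : ∀ j ∈ Finset.range N, IsDMp M (c j • φ j) :=
    fun j _ => IsDMp.smul (c j) (hφD j)
  obtain ⟨hψD, hTψ⟩ := IsDMp_T_finsum hMpos hTlin (Finset.range N) _ hDMpj
  have hTψval : T ψ = ((∑ j ∈ Finset.range N, ‖t j‖ / a' j : ℝ) : ℂ) := by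
    rw [hψ, hTψ]
    rw [Complex.ofReal_sum]
    apply Finset.sum_congr rfl
    intro j _
    rw [hTlin.2 (c j) (φ j) (hφD j), hct j]
  -- lower bound on ‖T ψ‖
  have hsum_pos : ∀ j ∈ Finset.range N, ε < ‖t j‖ / a' j := by
    intro j _
    rw [lt_div_iff₀ (ha'pos j)]
    linarith [hεa j]
  have hTψnorm : C < ‖T ψ‖ := by
    rw [hTψval, Complex.norm_real, Real.norm_eq_abs]
    have h1 : (N : ℝ) * ε ≤ ∑ j ∈ Finset.range N, ‖t j‖ / a' j := by
      calc (N : ℝ) * ε = ∑ _j ∈ Finset.range N, ε := by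
            rw [Finset.sum_const, Finset.card_range, nsmul_eq_mul]
        _ ≤ _ := Finset.sum_le_sum fun j hj => (hsum_pos j hj).le
    have h2 : C < (N : ℝ) * ε := by
      rw [hN]
      push_cast
      have := Nat.le_ceil (C / ε)
      have h3 : C / ε * ε ≤ (⌈C / ε⌉₊ : ℝ) * ε := by
        apply mul_le_mul_of_nonneg_right this hε.le
      rw [div_mul_cancel₀ _ (ne_of_gt hε)] at h3
      nlinarith
    calc C < (N:ℝ) * ε := h2
      _ ≤ ∑ j ∈ Finset.range N, ‖t j‖ / a' j := h1
      _ ≤ |∑ j ∈ Finset.range N, ‖t j‖ / a' j| := le_abs_self _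
  -- upper bound: rnorm ψ ≤ 1
  have hrψ : rnorm M r ψ ≤ 1 := by
    refine iSup_le fun k => iSup_le fun x => ?_
    have hmd : mderiv k ψ x = ∑ j ∈ Finset.range N, c j * mderiv k (φ j) x := by
      rw [hψ, mderiv_finsum k (Finset.range N) (fun j => c j • φ j) (fun j _ => ((hφD j).cd'.const_smul (c j)))]
      rw [Finset.sum_apply]
      apply Finset.sum_congr rfl
      intro j _
      rw [mderiv_smul k (c j) (hφD j).cd']
      simp
    by_cases hx : ∃ j ∈ Finset.range N, x ∈ tsupport (φ j)
    · obtain ⟨j0, hj0, hxj0⟩ := hx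
      have honly : ∀ j ∈ Finset.range N, j ≠ j0 → c j * mderiv k (φ j) x = 0 := by
        intro j _ hjne
        have hxnot : x ∉ tsupport (φ j) := by
          rcases lt_or_gt_of_ne hjne with h | h
          · exact fun hmem => Set.disjoint_left.mp (hdisj j j0 h) hmem hxj0
          · exact fun hmem => Set.disjoint_left.mp (hdisj j0 j h) hxj0 hmem
        have : mderiv k (φ j) x = 0 :=
          image_eq_zero_of_notMem_tsupport (fun hmem => hxnot (mderiv_tsupport k (φ j) hmem))
        rw [this, mul_zero]
      rw [hmd, Finset.sum_eq_single_of_mem j0 hj0 honly]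
      have hnorm_eq : ‖c j0 * mderiv k (φ j0) x‖ = (a' j0)⁻¹ * ‖mderiv k (φ j0) x‖ := by
        rw [norm_mul, hnormc j0]
      rw [hnorm_eq, mul_div_assoc, ENNReal.ofReal_mul (by positivity)]
      calc ENNReal.ofReal (a' j0)⁻¹ *
            ENNReal.ofReal (‖mderiv k (φ j0) x‖ / (prodSeq r (∑ i, k i) * M (∑ i, k i)))
          ≤ ENNReal.ofReal (a' j0)⁻¹ * a j0 := by
            gcongr
            exact le_rnorm M r (φ j0) k x
        _ = 1 := by
            rw [haofReal j0, ← ENNReal.ofReal_mul (by positivity),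
              inv_mul_cancel₀ (ne_of_gt (ha'pos j0))]
            simp
    · push_neg at hx
      have : mderiv k ψ x = 0 := by
        rw [hmd]
        apply Finset.sum_eq_zero
        intro j hj
        have : mderiv k (φ j) x = 0 :=
          image_eq_zero_of_notMem_tsupport (fun hmem => hx j hj (mderiv_tsupport k (φ j) hmem))
        rw [this, mul_zero]
      rw [this]
      simp
  -- contradiction
  have hfinal := hbound ψ hψD
  have hub : ENNReal.ofReal ‖T ψ‖ ≤ ENNReal.ofReal C := by
    calc ENNReal.ofReal ‖T ψ‖ ≤ ENNReal.ofReal C * rnorm M r ψ := hfinal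
      _ ≤ ENNReal.ofReal C * 1 := by gcongr
      _ = ENNReal.ofReal C := mul_one _
  have : ‖T ψ‖ ≤ C := by
    have := (ENNReal.ofReal_le_ofReal_iff hC.le).mp hub
    exact this
  linarith

/-- (a) ⇒ (b), with the same sequence `(r_p)`. -/
theorem stmt1 {d : ℕ} (M : ℕ → ℝ) (hMpos : ∀ p, 0 < M p) (hM0 : M 0 = 1)
    (hM1 : CondM1 M)
    (T : (Euc d → ℂ) → ℂ) (hTlin : LinearOnD M T)
    (r : ℕ → ℝ) (hr : RClass r) (C : ℝ) (hC : 0 < C)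
    (hbound : ∀ φ, IsDMp M φ →
      ENNReal.ofReal ‖T φ‖ ≤ ENNReal.ofReal C * rnorm M r φ) :
    ∀ ε > 0, ∃ K : Set (Euc d), IsCompact K ∧
      ∀ φ, IsDMp M φ → Disjoint (tsupport φ) K →
        ENNReal.ofReal ‖T φ‖ ≤ ENNReal.ofReal ε * rnorm M r φ :=
  stmt1' M hMpos hM0 T hTlin r hr C hC hbound

end
end

section
/- Let θ ∈ D^{{M_p}} be such that θ(x) = 1 for all x ∈ ℝ^d with |x| ≤ 1, and for l ∈ ℕ (l ≥ 1) set θ_l(x) := θ(x/l). Then for each (r_p) ∈ ℜ with r_1 ≥ 2, writing (r̄_p) := (r_p)/2 ∈ ℜ, there exists a constant C > 0 (depending only on θ and (r_p)) such that ‖(1 − θ_l)·φ‖_{(r_p)} ≤ C ‖φ‖_{(r̄_p)} for all φ ∈ D^{{M_p}} and all l ≥ 1. -/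
open scoped ENNReal BigOperators

noncomputable section

namespace Aux

variable {d : ℕ}

/-- foldr over a list of directions. -/
noncomputable def FL (L : List (Fin d)) (k : Fin d → ℕ) (φ : Euc d → ℂ) : Euc d → ℂ :=
  L.foldr (fun i ψ => (pderivI i)^[k i] ψ) φ

lemma mderiv_eq_FL (k : Fin d → ℕ) (φ : Euc d → ℂ) : mderiv k φ = FL (List.finRange d) k φ := rfl

lemma contDiff_pderivI (i : Fin d) {φ : Euc d → ℂ} (hφ : ContDiff ℝ (⊤ : ℕ∞) φ) :
    ContDiff ℝ (⊤ : ℕ∞) (pderivI i φ) :=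
  (hφ.fderiv_right (by simp)).clm_apply contDiff_const

lemma contDiff_pderivI_iter (i : Fin d) (n : ℕ) {φ : Euc d → ℂ} (hφ : ContDiff ℝ (⊤ : ℕ∞) φ) :
    ContDiff ℝ (⊤ : ℕ∞) ((pderivI i)^[n] φ) := by
  induction n with
  | zero => simpa using hφ
  | succ n ih => rw [Function.iterate_succ_apply']; exact contDiff_pderivI i ih

lemma contDiff_FL (L : List (Fin d)) (k : Fin d → ℕ) {φ : Euc d → ℂ} (hφ : ContDiff ℝ (⊤ : ℕ∞) φ) :
    ContDiff ℝ (⊤ : ℕ∞) (FL L k φ) := by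
  induction L with
  | nil => exact hφ
  | cons i L ih => exact contDiff_pderivI_iter i (k i) ih

lemma FL_congr (L : List (Fin d)) {k k' : Fin d → ℕ} (h : ∀ i ∈ L, k i = k' i)
    (φ : Euc d → ℂ) : FL L k φ = FL L k' φ := by
  induction L with
  | nil => rfl
  | cons i L ih =>
      show (pderivI i)^[k i] (FL L k φ) = (pderivI i)^[k' i] (FL L k' φ)
      rw [h i (List.mem_cons_self), ih (fun j hj => h j (List.mem_cons_of_mem i hj))]

lemma FL_cons (i : Fin d) (L : List (Fin d)) (k : Fin d → ℕ) (φ : Euc d → ℂ) :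
    FL (i :: L) k φ = (pderivI i)^[k i] (FL L k φ) := rfl

lemma FL_zero (L : List (Fin d)) (φ : Euc d → ℂ) : FL L (fun _ => 0) φ = φ := by
  induction L with
  | nil => rfl
  | cons i L ih => rw [FL_cons, ih]; rfl

/-- derivative of a constant -/
lemma pderivI_const (i : Fin d) (a : ℂ) : pderivI i (fun _ : Euc d => a) = fun _ => 0 := by
  funext x; simp [pderivI]

lemma pderivI_iter_const (i : Fin d) (a : ℂ) (n : ℕ) (hn : n ≠ 0) :
    (pderivI i)^[n] (fun _ : Euc d => a) = fun _ => 0 := by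
  induction n with
  | zero => exact absurd rfl hn
  | succ n ih =>
      rw [Function.iterate_succ_apply']
      rcases Nat.eq_zero_or_pos n with h | h
      · subst h; simpa using pderivI_const i a
      · rw [ih h.ne']; exact pderivI_const i 0

lemma FL_const (L : List (Fin d)) (k : Fin d → ℕ) (a : ℂ) (h : ∃ i ∈ L, k i ≠ 0) :
    FL L k (fun _ : Euc d => a) = fun _ => 0 := by
  induction L with
  | nil => simp at h
  | cons i L ih =>
      rw [FL_cons]
      rcases h with ⟨j, hj, hkj⟩
      rcases List.mem_cons.mp hj with rfl | hjL
      · rcases Nat.eq_zero_or_pos (k j) with h0 | hpos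
        · exact absurd h0 hkj
        · by_cases hL : ∃ i ∈ L, k i ≠ 0
          · rw [ih hL, pderivI_iter_const _ _ _ hpos.ne']
          · have : FL L k (fun _ : Euc d => a) = fun _ => a := by
              rw [FL_congr L (k' := fun _ => 0) (fun i hi => by
                by_contra hne; exact hL ⟨i, hi, hne⟩), FL_zero]
            rw [this, pderivI_iter_const _ _ _ hpos.ne']
      · rcases Nat.eq_zero_or_pos (k i) with h0 | hpos
        · rw [h0]; exact ih ⟨j, hjL, hkj⟩
        · rw [ih ⟨j, hjL, hkj⟩, pderivI_iter_const _ _ _ hpos.ne']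

/-- subtraction -/
lemma pderivI_sub (i : Fin d) {f g : Euc d → ℂ} (hf : Differentiable ℝ f)
    (hg : Differentiable ℝ g) :
    pderivI i (fun x => f x - g x) = fun x => pderivI i f x - pderivI i g x := by
  funext x; simp [pderivI, fderiv_fun_sub (hf x) (hg x)]

lemma pderivI_iter_sub (i : Fin d) (n : ℕ) {f g : Euc d → ℂ} (hf : ContDiff ℝ (⊤ : ℕ∞) f)
    (hg : ContDiff ℝ (⊤ : ℕ∞) g) :
    (pderivI i)^[n] (fun x => f x - g x) =
      fun x => (pderivI i)^[n] f x - (pderivI i)^[n] g x := by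
  induction n with
  | zero => rfl
  | succ n ih =>
      rw [Function.iterate_succ_apply', ih, Function.iterate_succ_apply',
        Function.iterate_succ_apply']
      exact pderivI_sub i ((contDiff_pderivI_iter i n hf).differentiable (by simp))
        ((contDiff_pderivI_iter i n hg).differentiable (by simp))

lemma FL_sub (L : List (Fin d)) (k : Fin d → ℕ) {f g : Euc d → ℂ} (hf : ContDiff ℝ (⊤ : ℕ∞) f)
    (hg : ContDiff ℝ (⊤ : ℕ∞) g) :
    FL L k (fun x => f x - g x) = fun x => FL L k f x - FL L k g x := by
  induction L with
  | nil => rfl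
  | cons i L ih =>
      rw [FL_cons, ih, FL_cons, FL_cons]
      exact pderivI_iter_sub i (k i) (contDiff_FL L k hf) (contDiff_FL L k hg)

/-- constant (real) scalar multiple -/
lemma pderivI_smul (i : Fin d) (a : ℝ) {f : Euc d → ℂ} (hf : Differentiable ℝ f) :
    pderivI i (fun x => a • f x) = fun x => a • pderivI i f x := by
  funext x
  simp only [pderivI, Complex.real_smul]
  rw [fderiv_const_mul (hf x) (a : ℂ)]
  simp

lemma pderivI_iter_smul (i : Fin d) (n : ℕ) (a : ℝ) {f : Euc d → ℂ} (hf : ContDiff ℝ (⊤ : ℕ∞) f) :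
    (pderivI i)^[n] (fun x => a • f x) = fun x => a • (pderivI i)^[n] f x := by
  induction n with
  | zero => rfl
  | succ n ih =>
      rw [Function.iterate_succ_apply', ih, Function.iterate_succ_apply']
      exact pderivI_smul i a ((contDiff_pderivI_iter i n hf).differentiable (by simp))

/-- scaling composition -/
lemma pderivI_comp_smul (i : Fin d) (c : ℝ) {ψ : Euc d → ℂ} (hψ : ContDiff ℝ (⊤ : ℕ∞) ψ) :
    pderivI i (fun x => ψ (c • x)) = fun x => c • pderivI i ψ (c • x) := by
  funext x
  have hS : HasFDerivAt (fun x : Euc d => c • x) (c • ContinuousLinearMap.id ℝ (Euc d)) x := by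
    exact (hasFDerivAt_id x).const_smul c
  have hψ' : HasFDerivAt ψ (fderiv ℝ ψ (c • x)) (c • x) :=
    ((hψ.differentiable (by simp)) (c • x)).hasFDerivAt
  have hcomp : HasFDerivAt (fun x : Euc d => ψ (c • x))
      ((fderiv ℝ ψ (c • x)).comp (c • ContinuousLinearMap.id ℝ (Euc d))) x := hψ'.comp x hS
  simp only [pderivI, hcomp.fderiv, ContinuousLinearMap.coe_comp', Function.comp_apply,
    ContinuousLinearMap.smul_apply, ContinuousLinearMap.coe_id', id_eq, map_smul]

lemma contDiff_comp_smul (c : ℝ) {ψ : Euc d → ℂ} (hψ : ContDiff ℝ (⊤ : ℕ∞) ψ) :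
    ContDiff ℝ (⊤ : ℕ∞) (fun x : Euc d => ψ (c • x)) :=
  hψ.comp ((c • ContinuousLinearMap.id ℝ (Euc d)).contDiff)

lemma pderivI_iter_comp_smul (i : Fin d) (n : ℕ) (c : ℝ) {ψ : Euc d → ℂ}
    (hψ : ContDiff ℝ (⊤ : ℕ∞) ψ) :
    (pderivI i)^[n] (fun x => ψ (c • x)) =
      fun x => (c ^ n : ℝ) • (pderivI i)^[n] ψ (c • x) := by
  induction n with
  | zero => simp
  | succ n ih =>
      rw [Function.iterate_succ_apply', ih]
      have h1 : ContDiff ℝ (⊤ : ℕ∞) ((pderivI i)^[n] ψ) := contDiff_pderivI_iter i n hψ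
      rw [pderivI_smul i _ ((contDiff_comp_smul c h1).differentiable (by simp)),
        pderivI_comp_smul i c h1]
      funext x
      rw [Function.iterate_succ_apply']
      simp [smul_smul, pow_succ]
      ring_nf

lemma FL_comp_smul (L : List (Fin d)) (k : Fin d → ℕ) (c : ℝ) {ψ : Euc d → ℂ}
    (hψ : ContDiff ℝ (⊤ : ℕ∞) ψ) :
    FL L k (fun x => ψ (c • x)) =
      fun x => (c ^ ((L.map k).sum) : ℝ) • FL L k ψ (c • x) := by
  induction L with
  | nil => simp [FL]
  | cons i L ih =>
      rw [FL_cons, ih, pderivI_iter_smul i (k i) _ (contDiff_comp_smul c (contDiff_FL L k hψ)),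
        pderivI_iter_comp_smul i (k i) c (contDiff_FL L k hψ)]
      funext x
      rw [FL_cons]
      simp only [List.map_cons, List.sum_cons, smul_smul]
      rw [← pow_add]
      ring_nf

/-- unit multi-index -/
def eI (i : Fin d) : Fin d → ℕ := fun j => if j = i then 1 else 0

lemma FL_cons_succ {i : Fin d} {L : List (Fin d)} (hiL : i ∉ L) (κ : Fin d → ℕ)
    (f : Euc d → ℂ) :
    FL (i :: L) (κ + eI i) f = pderivI i (FL (i :: L) κ f) := by
  rw [FL_cons, FL_cons]
  have h1 : FL L (κ + eI i) f = FL L κ f := by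
    refine FL_congr L (fun j hj => ?_) f
    have : j ≠ i := fun h => hiL (h ▸ hj)
    simp [eI, this]
  have h2 : (κ + eI i) i = κ i + 1 := by simp [eI]
  rw [h1, h2, Function.iterate_succ_apply']

lemma pderivI_step {ι : Type} [Fintype ι] (i : Fin d) (c : ι → ℝ) (F G : ι → Euc d → ℂ)
    (hF : ∀ t, ContDiff ℝ (⊤ : ℕ∞) (F t)) (hG : ∀ t, ContDiff ℝ (⊤ : ℕ∞) (G t)) :
    pderivI i (fun x => ∑ t, (c t : ℂ) * (F t x * G t x)) =
      fun x => ∑ t, (c t : ℂ) * (pderivI i (F t) x * G t x + F t x * pderivI i (G t) x) := by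
  funext x
  have hFd : ∀ t, DifferentiableAt ℝ (F t) x := fun t => ((hF t).differentiable (by simp)) x
  have hGd : ∀ t, DifferentiableAt ℝ (G t) x := fun t => ((hG t).differentiable (by simp)) x
  have hterm : ∀ t ∈ (Finset.univ : Finset ι),
      DifferentiableAt ℝ (fun y => (c t : ℂ) * (F t y * G t y)) x :=
    fun t _ => (((hFd t).mul (hGd t)).const_mul _)
  show fderiv ℝ (fun y => ∑ t, (c t : ℂ) * (F t y * G t y)) x (EuclideanSpace.single i 1) = _
  rw [fderiv_fun_sum hterm]
  rw [ContinuousLinearMap.sum_apply]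
  refine Finset.sum_congr rfl (fun t _ => ?_)
  rw [fderiv_const_mul (a := fun y => F t y * G t y) ((hFd t).mul (hGd t)) (c t : ℂ), fderiv_fun_mul (hFd t) (hGd t)]
  simp only [ContinuousLinearMap.smul_apply, ContinuousLinearMap.add_apply, smul_eq_mul,
    pderivI]
  ring

theorem leibniz (L : List (Fin d)) (hL : L.Nodup) (k : Fin d → ℕ) {f g : Euc d → ℂ}
    (hf : ContDiff ℝ (⊤ : ℕ∞) f) (hg : ContDiff ℝ (⊤ : ℕ∞) g) :
    ∃ (ι : Type) (_ : Fintype ι) (c : ι → ℝ) (κ lam : ι → Fin d → ℕ),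
      (∀ t, 0 ≤ c t) ∧ (∑ t, c t ≤ 2 ^ ((L.map k).sum)) ∧
      (∀ t j, κ t j + lam t j = if j ∈ L then k j else 0) ∧
      (∀ x, FL L k (fun y => f y * g y) x
          = ∑ t, (c t : ℂ) * (FL L (κ t) f x * FL L (lam t) g x)) := by
  induction L with
  | nil =>
      refine ⟨PUnit, inferInstance, fun _ => 1, fun _ _ => 0, fun _ _ => 0,
        fun _ => zero_le_one, by simp, by simp, fun x => by simp [FL]⟩
  | cons i L ih =>
      have hiL : i ∉ L := (List.nodup_cons.mp hL).1
      obtain ⟨ι, hFin, c, κ, lam, hc0, hcsum, hsplit, heq⟩ :=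
        ih (List.nodup_cons.mp hL).2
      -- inner induction on the number of i-derivatives
      have key : ∀ m : ℕ, ∃ (ι' : Type) (_ : Fintype ι') (c' : ι' → ℝ)
          (κ' lam' : ι' → Fin d → ℕ),
          (∀ t, 0 ≤ c' t) ∧ (∑ t, c' t ≤ 2 ^ ((L.map k).sum + m)) ∧
          (∀ t j, κ' t j + lam' t j = (if j ∈ L then k j else 0) + (if j = i then m else 0)) ∧
          (∀ x, (pderivI i)^[m] (FL L k (fun y => f y * g y)) x
              = ∑ t, (c' t : ℂ) * (FL (i :: L) (κ' t) f x * FL (i :: L) (lam' t) g x)) := by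
        intro m
        induction m with
        | zero =>
            refine ⟨ι, hFin, c, κ, lam, hc0, by simpa using hcsum, ?_, ?_⟩
            · intro t j; simp [hsplit t j]
            · intro x
              have hκi : ∀ t, κ t i = 0 := fun t => by
                have := hsplit t i; simp [hiL] at this; omega
              have hlami : ∀ t, lam t i = 0 := fun t => by
                have := hsplit t i; simp [hiL] at this; omega
              have h1 : ∀ t, FL (i :: L) (κ t) f = FL L (κ t) f := fun t => by
                rw [FL_cons, hκi t]; rfl
              have h2 : ∀ t, FL (i :: L) (lam t) g = FL L (lam t) g := fun t => by
                rw [FL_cons, hlami t]; rfl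
              simp only [Function.iterate_zero, id_eq, h1, h2]
              exact heq x
        | succ m ihm =>
            obtain ⟨ι', hFin', c', κ', lam', h0, hsum, hspl, heqm⟩ := ihm
            letI := hFin'
            have hκsmooth : ∀ t, ContDiff ℝ (⊤ : ℕ∞) (FL (i :: L) (κ' t) f) :=
              fun t => contDiff_FL _ _ hf
            have hlamsmooth : ∀ t, ContDiff ℝ (⊤ : ℕ∞) (FL (i :: L) (lam' t) g) :=
              fun t => contDiff_FL _ _ hg
            have hfuneq : (pderivI i)^[m] (FL L k (fun y => f y * g y))
                = fun x => ∑ t, (c' t : ℂ)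
                    * (FL (i :: L) (κ' t) f x * FL (i :: L) (lam' t) g x) := funext heqm
            refine ⟨ι' × Bool, inferInstance,
              fun p => c' p.1,
              fun p => if p.2 then κ' p.1 else κ' p.1 + eI i,
              fun p => if p.2 then lam' p.1 + eI i else lam' p.1,
              fun p => h0 p.1, ?_, ?_, ?_⟩
            · rw [Fintype.sum_prod_type]
              have : ∀ t : ι', (∑ _b : Bool, c' t) = 2 * c' t := by
                intro t; rw [Fintype.sum_bool]; ring
              calc (∑ t : ι', ∑ _b : Bool, c' t) = ∑ t : ι', 2 * c' t := by
                    exact Finset.sum_congr rfl (fun t _ => this t)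
                _ = 2 * ∑ t, c' t := by rw [Finset.mul_sum]
                _ ≤ 2 * 2 ^ ((L.map k).sum + m) := by linarith [hsum]
                _ = 2 ^ ((L.map k).sum + (m + 1)) := by ring
            · rintro ⟨t, b⟩ j
              have h := hspl t j
              rcases b with _ | _ <;> by_cases hji : j = i <;>
                simp only [eI, hji, if_true, if_false, Bool.false_eq_true, Pi.add_apply,
                  if_pos rfl] at h ⊢ <;> omega
            · intro x
              rw [Function.iterate_succ_apply', hfuneq,
                pderivI_step i c' _ _ hκsmooth hlamsmooth]
              rw [Fintype.sum_prod_type]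
              refine Finset.sum_congr rfl (fun t _ => ?_)
              rw [Fintype.sum_bool]
              simp only [if_true, if_false, Bool.false_eq_true]
              rw [← FL_cons_succ hiL (κ' t) f, ← FL_cons_succ hiL (lam' t) g]
              ring
      obtain ⟨ι', hFin', c', κ', lam', h0, hsum, hspl, heqm⟩ := key (k i)
      refine ⟨ι', hFin', c', κ', lam', h0, ?_, ?_, ?_⟩
      · have : ((i :: L).map k).sum = (L.map k).sum + k i := by
          simp [List.sum_cons, Nat.add_comm]
        rw [this]; exact hsum
      · intro t j
        by_cases hji : j = i
        · subst hji; simp [hiL, hspl t j]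
        · have : (j ∈ i :: L) ↔ (j ∈ L) := by simp [List.mem_cons, hji]
          rw [hspl t j]; simp [hji, this]
      · intro x
        rw [FL_cons]
        exact heqm x

/-! ### Sequence lemmas -/

lemma M_cross {M : ℕ → ℝ} (hMpos : ∀ p, 0 < M p) (hM1 : CondM1 M) :
    ∀ p q, p ≤ q → M (p + 1) * M q ≤ M p * M (q + 1) := by
  intro p q hpq
  induction q, hpq using Nat.le_induction with
  | base => exact le_of_eq (mul_comm _ _)
  | succ n hpn ih =>
      have h2 := hM1 n
      have h3 := hMpos n
      have h4 := hMpos (n + 1)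
      have h5 := hMpos (p + 1)
      have h6 := hMpos (n + 2)
      have h7 := hMpos p
      nlinarith [mul_le_mul_of_nonneg_right ih h6.le,
        mul_le_mul_of_nonneg_left h2 h5.le, mul_pos h5 h4]

lemma M_mul_le {M : ℕ → ℝ} (hMpos : ∀ p, 0 < M p) (hM0 : M 0 = 1) (hM1 : CondM1 M)
    (s q : ℕ) : M s * M q ≤ M (s + q) := by
  induction q with
  | zero => simp [hM0]
  | succ q ih =>
      have hc := M_cross hMpos hM1 q (s + q) (Nat.le_add_left q s)
      have h1 := hMpos q
      have h2 := hMpos (q + 1)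
      have h3 := hMpos s
      have : s + (q + 1) = s + q + 1 := by omega
      rw [this]
      nlinarith [mul_le_mul_of_nonneg_left ih h2.le]

lemma one_le_prodSeq {u : ℕ → ℝ} (h1 : ∀ p, 1 ≤ u p) (p : ℕ) : 1 ≤ prodSeq u p := by
  unfold prodSeq
  have := Finset.prod_le_prod (s := Finset.range (p + 1)) (f := fun _ => (1:ℝ)) (g := u)
    (fun i _ => zero_le_one) (fun i _ => h1 i)
  simpa using this

lemma prodSeq_pos {u : ℕ → ℝ} (h1 : ∀ p, 1 ≤ u p) (p : ℕ) : 0 < prodSeq u p :=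
  lt_of_lt_of_le one_pos (one_le_prodSeq h1 p)

lemma prodSeq_tail {u : ℕ → ℝ} (hu0 : u 0 = 1) (a : ℕ) :
    prodSeq u a = ∏ i ∈ Finset.range a, u (1 + i) := by
  unfold prodSeq
  rw [show a + 1 = 1 + a by omega, Finset.prod_range_add]
  simp [hu0]

lemma prodSeq_split {u : ℕ → ℝ} (a b : ℕ) :
    prodSeq u (a + b) = prodSeq u b * ∏ i ∈ Finset.range a, u (b + 1 + i) := by
  unfold prodSeq
  rw [show a + b + 1 = (b + 1) + a by omega, Finset.prod_range_add]

lemma prodSeq_submul {u : ℕ → ℝ} (hu0 : u 0 = 1) (h1 : ∀ p, 1 ≤ u p) (hmono : Monotone u)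
    (a b : ℕ) : prodSeq u a * prodSeq u b ≤ prodSeq u (a + b) := by
  rw [prodSeq_split a b, mul_comm (prodSeq u b)]
  have : prodSeq u a ≤ ∏ i ∈ Finset.range a, u (b + 1 + i) := by
    rw [prodSeq_tail hu0 a]
    refine Finset.prod_le_prod (fun i _ => le_trans zero_le_one (h1 _)) (fun i _ => ?_)
    exact hmono (by omega)
  exact mul_le_mul_of_nonneg_right this (prodSeq_pos h1 b).le

lemma prodSeq_mono {u : ℕ → ℝ} (h1 : ∀ p, 1 ≤ u p) : Monotone (prodSeq u) := by
  refine monotone_nat_of_le_succ (fun p => ?_)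
  unfold prodSeq
  rw [Finset.prod_range_succ (n := p + 1)]
  exact le_mul_of_one_le_right (le_of_lt (prodSeq_pos h1 p)) (h1 _)

/-- geometric domination: `h'^q ≤ C ⋅ prodSeq u q`. -/
lemma exists_geom_bound {u : ℕ → ℝ} (h1 : ∀ p, 1 ≤ u p)
    (htop : Filter.Tendsto u Filter.atTop Filter.atTop) (h' : ℝ) (hh' : 1 ≤ h') :
    ∃ C, 1 ≤ C ∧ ∀ q, h' ^ q ≤ C * prodSeq u q := by
  obtain ⟨p₀, hp₀⟩ := Filter.eventually_atTop.mp (htop.eventually_ge_atTop h')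
  have hCpos : (1:ℝ) ≤ h' ^ p₀ := by
    have := pow_le_pow_left₀ (zero_le_one) hh' p₀
    simpa using this
  refine ⟨h' ^ p₀, hCpos, fun q => ?_⟩
  rcases le_or_gt q p₀ with hq | hq
  · calc h' ^ q ≤ h' ^ p₀ := pow_le_pow_right₀ hh' hq
      _ ≤ h' ^ p₀ * prodSeq u q :=
          le_mul_of_one_le_right (by positivity) (one_le_prodSeq h1 q)
  · obtain ⟨s, rfl⟩ : ∃ s, q = s + p₀ := ⟨q - p₀, by omega⟩
    have h2 : h' ^ s ≤ ∏ i ∈ Finset.range s, u (p₀ + 1 + i) := by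
      calc h' ^ s = ∏ _i ∈ Finset.range s, h' := by
            rw [Finset.prod_const, Finset.card_range]
        _ ≤ ∏ i ∈ Finset.range s, u (p₀ + 1 + i) :=
            Finset.prod_le_prod (fun _ _ => by linarith) (fun i _ => hp₀ _ (by omega))
    have hprodnn : (0:ℝ) ≤ ∏ i ∈ Finset.range s, u (p₀ + 1 + i) :=
      Finset.prod_nonneg (fun i _ => by linarith [h1 (p₀ + 1 + i)])
    calc h' ^ (s + p₀) = h' ^ p₀ * h' ^ s := by rw [pow_add]; ring
      _ ≤ h' ^ p₀ * ∏ i ∈ Finset.range s, u (p₀ + 1 + i) :=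
          mul_le_mul_of_nonneg_left h2 (by positivity)
      _ ≤ h' ^ p₀ * (prodSeq u p₀ * ∏ i ∈ Finset.range s, u (p₀ + 1 + i)) := by
          refine mul_le_mul_of_nonneg_left ?_ (by positivity)
          exact le_mul_of_one_le_left hprodnn (one_le_prodSeq h1 p₀)
      _ = h' ^ p₀ * prodSeq u (s + p₀) := by rw [prodSeq_split s p₀]


end Aux

set_option maxHeartbeats 2000000 in
/-- the cut-off estimate `‖(1-θ_l)φ‖_{(r_p)} ≤ C ‖φ‖_{(r_p)/2}`. -/
theorem stmt9 {d : ℕ} (M : ℕ → ℝ) (hMpos : ∀ p, 0 < M p) (hM0 : M 0 = 1)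
    (hM1 : CondM1 M)
    (θ : Euc d → ℂ) (hθ : IsDMp M θ) (hθ1 : ∀ x : Euc d, ‖x‖ ≤ 1 → θ x = 1)
    (r : ℕ → ℝ) (hr : RClass r) (hr1 : 2 ≤ r 1)
    (rbar : ℕ → ℝ) (hrbar0 : rbar 0 = 1) (hrbarp : ∀ p, 1 ≤ p → rbar p = r p / 2) :
    ∃ C > 0, ∀ φ, IsDMp M φ → ∀ l : ℕ, 1 ≤ l →
      rnorm M r (fun x => (1 - θ ((l : ℝ)⁻¹ • x)) * φ x) ≤
        ENNReal.ofReal C * rnorm M rbar φ := by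
  classical
  obtain ⟨hr0, hrmono, hrtop⟩ := hr
  have hrbar1 : ∀ p, 1 ≤ rbar p := by
    intro p
    rcases Nat.eq_zero_or_pos p with rfl | hp
    · simp [hrbar0]
    · rw [hrbarp p hp]
      have h2 : (2:ℝ) ≤ r p := le_trans hr1 (hrmono hp)
      linarith
  have hrbarmono : Monotone rbar := by
    refine monotone_nat_of_le_succ (fun p => ?_)
    rcases Nat.eq_zero_or_pos p with rfl | hp
    · rw [hrbar0, hrbarp 1 le_rfl]; linarith
    · rw [hrbarp p hp, hrbarp (p+1) (by omega)]
      have := hrmono (Nat.le_succ p); linarith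
  have hrbartop : Filter.Tendsto rbar Filter.atTop Filter.atTop := by
    have h2 : Filter.Tendsto (fun p => r p / 2) Filter.atTop Filter.atTop :=
      hrtop.atTop_div_const two_pos
    refine h2.congr' ?_
    filter_upwards [Filter.eventually_ge_atTop 1] with p hp
    exact (hrbarp p hp).symm
  have hrrel : ∀ n : ℕ, prodSeq r n = 2 ^ n * prodSeq rbar n := by
    intro n
    rw [Aux.prodSeq_tail hrbar0, Aux.prodSeq_tail hr0]
    rw [Finset.prod_congr rfl (fun i (_ : i ∈ Finset.range n) => hrbarp (1+i) (by omega))]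
    rw [show (fun i => r (1+i) / 2) = fun i => r (1+i) / 2 from rfl]
    rw [Finset.prod_div_distrib, Finset.prod_const, Finset.card_range]
    field_simp
  -- θ data
  obtain ⟨hθsm, _, h, hpos, hfin⟩ := hθ
  set a := (hnorm M h θ).toReal with ha
  have ha0 : 0 ≤ a := ENNReal.toReal_nonneg
  have hθbd : ∀ (k : Fin d → ℕ) (y : Euc d),
      ‖mderiv k θ y‖ ≤ a * (h ^ (∑ i, k i) * M (∑ i, k i)) := by
    intro k y
    have hle : ENNReal.ofReal (‖mderiv k θ y‖ / (h ^ (∑ i, k i) * M (∑ i, k i)))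
        ≤ hnorm M h θ := by
      unfold hnorm
      exact le_iSup₂ (f := fun (k : Fin d → ℕ) (x : Euc d) =>
        ENNReal.ofReal (‖mderiv k θ x‖ / (h ^ (∑ i, k i) * M (∑ i, k i)))) k y
    have h2 := (ENNReal.ofReal_le_iff_le_toReal hfin.ne).mp hle
    have hden : 0 < h ^ (∑ i, k i) * M (∑ i, k i) :=
      mul_pos (pow_pos hpos _) (hMpos _)
    calc ‖mderiv k θ y‖ = ‖mderiv k θ y‖ / (h ^ (∑ i, k i) * M (∑ i, k i))
          * (h ^ (∑ i, k i) * M (∑ i, k i)) := by rw [div_mul_cancel₀ _ hden.ne']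
      _ ≤ a * (h ^ (∑ i, k i) * M (∑ i, k i)) :=
          mul_le_mul_of_nonneg_right h2 hden.le
  set h' := max h 1 with hh'
  have hh'1 : (1:ℝ) ≤ h' := le_max_right _ _
  have hθbd' : ∀ (k : Fin d → ℕ) (y : Euc d),
      ‖mderiv k θ y‖ ≤ a * (h' ^ (∑ i, k i) * M (∑ i, k i)) := by
    intro k y
    refine le_trans (hθbd k y) ?_
    have : h ^ (∑ i, k i) ≤ h' ^ (∑ i, k i) :=
      pow_le_pow_left₀ hpos.le (le_max_left h 1) _
    exact mul_le_mul_of_nonneg_left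
      (mul_le_mul_of_nonneg_right this (hMpos _).le) ha0
  obtain ⟨C₀, hC₀1, hC₀⟩ := Aux.exists_geom_bound hrbar1 hrbartop h' hh'1
  set A := a + 1 with hA
  have hA1 : (1:ℝ) ≤ A := by linarith
  refine ⟨A * C₀, by nlinarith, ?_⟩
  intro φ hφ l hl
  set c := (l:ℝ)⁻¹ with hc
  have hl1 : (1:ℝ) ≤ (l:ℝ) := by exact_mod_cast hl
  have hc0 : 0 < c := by rw [hc]; positivity
  have hc1 : c ≤ 1 := by rw [hc]; exact inv_le_one_of_one_le₀ hl1
  have hθc : ContDiff ℝ (⊤ : ℕ∞) (fun x : Euc d => θ (c • x)) := Aux.contDiff_comp_smul c hθsm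
  have hgsm : ContDiff ℝ (⊤ : ℕ∞) (fun x : Euc d => 1 - θ (c • x)) := contDiff_const.sub hθc
  -- bound on the derivatives of 1 - θ_l
  have hgbd : ∀ (k : Fin d → ℕ) (x : Euc d),
      ‖mderiv k (fun x : Euc d => 1 - θ (c • x)) x‖
        ≤ A * (h' ^ (∑ i, k i) * M (∑ i, k i)) := by
    intro k x
    by_cases hk : ∀ i, k i = 0
    · have hn : (∑ i, k i) = 0 := Finset.sum_eq_zero (fun i _ => hk i)
      have hkfun : k = fun _ => 0 := funext hk
      have hmd : mderiv k (fun x : Euc d => 1 - θ (c • x))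
          = fun x : Euc d => 1 - θ (c • x) := by
        rw [Aux.mderiv_eq_FL, hkfun, Aux.FL_zero]
      have hθ0 : mderiv (fun _ : Fin d => 0) θ = θ := by
        rw [Aux.mderiv_eq_FL, Aux.FL_zero]
      have hb := hθbd' (fun _ => 0) (c • x)
      rw [hθ0] at hb
      simp only [Finset.sum_const_zero, pow_zero, hM0, one_mul, mul_one] at hb
      rw [hmd, hn, pow_zero, hM0]
      calc ‖1 - θ (c • x)‖ ≤ ‖(1:ℂ)‖ + ‖θ (c • x)‖ := norm_sub_le _ _
        _ ≤ 1 + a := by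
            rw [norm_one]
            linarith
        _ = A * (1 * 1) := by rw [hA]; ring
    · push_neg at hk
      obtain ⟨i, hi⟩ := hk
      have hsub : mderiv k (fun x : Euc d => 1 - θ (c • x))
          = fun x => mderiv k (fun _ : Euc d => (1:ℂ)) x
              - mderiv k (fun x : Euc d => θ (c • x)) x := by
        rw [Aux.mderiv_eq_FL]
        exact Aux.FL_sub _ k contDiff_const hθc
      have hconst : mderiv k (fun _ : Euc d => (1:ℂ)) = fun _ => 0 :=
        Aux.FL_const _ k 1 ⟨i, List.mem_finRange i, hi⟩
      have hcomp : mderiv k (fun x : Euc d => θ (c • x))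
          = fun x => (c ^ (((List.finRange d).map k).sum) : ℝ) • mderiv k θ (c • x) := by
        rw [Aux.mderiv_eq_FL]
        exact Aux.FL_comp_smul _ k c hθsm
      have hNn : ((List.finRange d).map k).sum = ∑ i, k i := (Fin.sum_univ_def k).symm
      rw [hsub, hconst, hcomp]
      simp only [zero_sub, norm_neg, norm_smul, Real.norm_eq_abs,
        abs_of_nonneg (pow_nonneg hc0.le _)]
      have hcpow : c ^ (((List.finRange d).map k).sum) ≤ 1 := pow_le_one₀ hc0.le hc1
      calc c ^ (((List.finRange d).map k).sum) * ‖mderiv k θ (c • x)‖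
          ≤ 1 * (a * (h' ^ (∑ i, k i) * M (∑ i, k i))) :=
            mul_le_mul hcpow (hθbd' k (c • x)) (norm_nonneg _) zero_le_one
        _ ≤ A * (h' ^ (∑ i, k i) * M (∑ i, k i)) := by
            rw [one_mul, hA]
            have : (0:ℝ) ≤ h' ^ (∑ i, k i) * M (∑ i, k i) := by
              have := hMpos (∑ i, k i); positivity
            nlinarith
  by_cases hS : rnorm M rbar φ = ⊤
  · rw [hS, ENNReal.mul_top]
    · exact le_top
    · simp only [ne_eq, ENNReal.ofReal_eq_zero, not_le]
      nlinarith
  · set b := (rnorm M rbar φ).toReal with hb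
    have hb0 : 0 ≤ b := ENNReal.toReal_nonneg
    have hφbd : ∀ (k : Fin d → ℕ) (x : Euc d),
        ‖mderiv k φ x‖ ≤ b * (prodSeq rbar (∑ i, k i) * M (∑ i, k i)) := by
      intro k x
      have hle : ENNReal.ofReal
          (‖mderiv k φ x‖ / (prodSeq rbar (∑ i, k i) * M (∑ i, k i)))
          ≤ rnorm M rbar φ := by
        unfold rnorm
        exact le_iSup₂ (f := fun (k : Fin d → ℕ) (x : Euc d) =>
          ENNReal.ofReal (‖mderiv k φ x‖ / (prodSeq rbar (∑ i, k i) * M (∑ i, k i)))) k x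
      have h2 := (ENNReal.ofReal_le_iff_le_toReal hS).mp hle
      have hden : 0 < prodSeq rbar (∑ i, k i) * M (∑ i, k i) :=
        mul_pos (Aux.prodSeq_pos hrbar1 _) (hMpos _)
      calc ‖mderiv k φ x‖
          = ‖mderiv k φ x‖ / (prodSeq rbar (∑ i, k i) * M (∑ i, k i))
            * (prodSeq rbar (∑ i, k i) * M (∑ i, k i)) := by rw [div_mul_cancel₀ _ hden.ne']
        _ ≤ b * (prodSeq rbar (∑ i, k i) * M (∑ i, k i)) :=
            mul_le_mul_of_nonneg_right h2 hden.le
    -- main pointwise estimate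
    have main : ∀ (k : Fin d → ℕ) (x : Euc d),
        ‖mderiv k (fun x : Euc d => (1 - θ (c • x)) * φ x) x‖
          ≤ A * C₀ * b * (prodSeq r (∑ i, k i) * M (∑ i, k i)) := by
      intro k x
      obtain ⟨ι, inst, co, κ, lam, h0, hsum, hsplit, heqL⟩ :=
        Aux.leibniz (List.finRange d) (List.nodup_finRange d) k
          (f := fun x : Euc d => 1 - θ (c • x)) (g := φ) hgsm hφ.1
      letI := inst
      have hsplit' : ∀ t j, κ t j + lam t j = k j := fun t j => by
        simpa [List.mem_finRange] using hsplit t j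
      have hsl : ∀ t, (∑ j, κ t j) + (∑ j, lam t j) = ∑ i, k i := fun t => by
        rw [← Finset.sum_add_distrib]
        exact Finset.sum_congr rfl (fun j _ => hsplit' t j)
      have heq : mderiv k (fun x : Euc d => (1 - θ (c • x)) * φ x) x
          = ∑ t, (co t : ℂ) * (mderiv (κ t) (fun x : Euc d => 1 - θ (c • x)) x
              * mderiv (lam t) φ x) := heqL x
      rw [heq]
      set K := A * b * C₀ * (prodSeq rbar (∑ i, k i) * M (∑ i, k i)) with hK
      have hK0 : 0 ≤ K := by
        have h1 := Aux.prodSeq_pos hrbar1 (∑ i, k i)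
        have h2 := hMpos (∑ i, k i)
        rw [hK]
        have hA0 : (0:ℝ) ≤ A := by linarith
        have hC₀0 : (0:ℝ) ≤ C₀ := by linarith
        exact mul_nonneg (mul_nonneg (mul_nonneg hA0 hb0) hC₀0) (mul_pos h1 h2).le
      have hterm : ∀ t, ‖(co t : ℂ) * (mderiv (κ t) (fun x : Euc d => 1 - θ (c • x)) x
          * mderiv (lam t) φ x)‖ ≤ co t * K := by
        intro t
        rw [norm_mul, norm_mul, Complex.norm_real, Real.norm_eq_abs, abs_of_nonneg (h0 t)]
        refine mul_le_mul_of_nonneg_left ?_ (h0 t)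
        have e1 := hgbd (κ t) x
        have e2 := hφbd (lam t) x
        have hMle : M (∑ j, κ t j) * M (∑ j, lam t j) ≤ M (∑ i, k i) := by
          have := Aux.M_mul_le hMpos hM0 hM1 (∑ j, κ t j) (∑ j, lam t j)
          rwa [hsl t] at this
        have hRle : prodSeq rbar (∑ j, κ t j) * prodSeq rbar (∑ j, lam t j)
            ≤ prodSeq rbar (∑ i, k i) := by
          have := Aux.prodSeq_submul hrbar0 hrbar1 hrbarmono (∑ j, κ t j) (∑ j, lam t j)
          rwa [hsl t] at this
        have hgeo := hC₀ (∑ j, κ t j)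
        have p1 : (0:ℝ) < prodSeq rbar (∑ j, κ t j) := Aux.prodSeq_pos hrbar1 _
        have p2 : (0:ℝ) < prodSeq rbar (∑ j, lam t j) := Aux.prodSeq_pos hrbar1 _
        have p3 : (0:ℝ) < M (∑ j, κ t j) := hMpos _
        have p4 : (0:ℝ) < M (∑ j, lam t j) := hMpos _
        have p5 : (0:ℝ) < prodSeq rbar (∑ i, k i) := Aux.prodSeq_pos hrbar1 _
        have p6 : (0:ℝ) < M (∑ i, k i) := hMpos _
        have hA0 : (0:ℝ) ≤ A := by linarith
        have hC₀0 : (0:ℝ) ≤ C₀ := by linarith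
        have hh'0 : (0:ℝ) ≤ h' ^ (∑ j, κ t j) := by positivity
        calc ‖mderiv (κ t) (fun x : Euc d => 1 - θ (c • x)) x‖ * ‖mderiv (lam t) φ x‖
            ≤ (A * (h' ^ (∑ j, κ t j) * M (∑ j, κ t j)))
              * (b * (prodSeq rbar (∑ j, lam t j) * M (∑ j, lam t j))) :=
              mul_le_mul e1 e2 (norm_nonneg _) (by positivity)
          _ = (A * b) * ((h' ^ (∑ j, κ t j) * prodSeq rbar (∑ j, lam t j))
              * (M (∑ j, κ t j) * M (∑ j, lam t j))) := by ring
          _ ≤ (A * b) * (((C₀ * prodSeq rbar (∑ j, κ t j)) * prodSeq rbar (∑ j, lam t j))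
              * M (∑ i, k i)) := by
              refine mul_le_mul_of_nonneg_left ?_ (by positivity)
              refine mul_le_mul ?_ hMle (by positivity) (by positivity)
              exact mul_le_mul_of_nonneg_right hgeo p2.le
          _ ≤ (A * b) * ((C₀ * prodSeq rbar (∑ i, k i)) * M (∑ i, k i)) := by
              refine mul_le_mul_of_nonneg_left ?_ (by positivity)
              refine mul_le_mul_of_nonneg_right ?_ p6.le
              rw [mul_assoc]
              exact mul_le_mul_of_nonneg_left hRle hC₀0
          _ = K := by rw [hK]; ring
      have hNn : ((List.finRange d).map k).sum = ∑ i, k i := (Fin.sum_univ_def k).symm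
      calc ‖∑ t, (co t : ℂ) * (mderiv (κ t) (fun x : Euc d => 1 - θ (c • x)) x
              * mderiv (lam t) φ x)‖
          ≤ ∑ t, ‖(co t : ℂ) * (mderiv (κ t) (fun x : Euc d => 1 - θ (c • x)) x
              * mderiv (lam t) φ x)‖ := norm_sum_le _ _
        _ ≤ ∑ t, co t * K := Finset.sum_le_sum (fun t _ => hterm t)
        _ = (∑ t, co t) * K := (Finset.sum_mul _ _ _).symm
        _ ≤ (2:ℝ) ^ (∑ i, k i) * K := by
            refine mul_le_mul_of_nonneg_right ?_ hK0
            rw [← hNn]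
            exact hsum
        _ = A * C₀ * b * (prodSeq r (∑ i, k i) * M (∑ i, k i)) := by
            rw [hK, hrrel (∑ i, k i)]; ring
    -- conclude in ℝ≥0∞
    show rnorm M r (fun x : Euc d => (1 - θ (c • x)) * φ x) ≤ _
    unfold rnorm
    refine iSup_le (fun k => iSup_le (fun x => ?_))
    have hden : 0 < prodSeq r (∑ i, k i) * M (∑ i, k i) := by
      have h1 : (0:ℝ) < prodSeq r (∑ i, k i) := by
        have : ∀ p, 1 ≤ r p := fun p => by
          rcases Nat.eq_zero_or_pos p with rfl | hp
          · simp [hr0]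
          · have := hrmono (Nat.one_le_iff_ne_zero.mpr hp.ne'); linarith [hr1]
        exact Aux.prodSeq_pos this _
      exact mul_pos h1 (hMpos _)
    have hstep : ENNReal.ofReal (‖mderiv k (fun x : Euc d => (1 - θ (c • x)) * φ x) x‖
        / (prodSeq r (∑ i, k i) * M (∑ i, k i))) ≤ ENNReal.ofReal (A * C₀ * b) := by
      refine ENNReal.ofReal_le_ofReal ?_
      rw [div_le_iff₀ hden]
      exact main k x
    refine le_trans hstep ?_
    rw [ENNReal.ofReal_mul (by nlinarith : (0:ℝ) ≤ A * C₀)]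
    exact mul_le_mul_right ENNReal.ofReal_toReal_le _

end
end
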